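/- arXiv:1612.03095 — 6 statements merged into one kernel-verified Lean document; each statement's English description precedes it below -/
import Mathlib

section
/- Let φ, η₁, η₂ : ℤ → ℂ∖{0} be periodic of periods n₁, n₁, n₂ respectively with gcd(n₁, n₂) = 1. Suppose there exists δ > 0 such that for all large enough N, the number of t ∈ {1,…,N} with φ(t) ≠ η₁(t)η₂(t) is less than δN. Then there exists a nonzero complex number ξ such that for all large enough N, the number of t ∈ {1,…,N} with φ(t) ≠ ξ·η₁(t) is less than 2δN. -/
/-!
The set of `t` with `φ t ≠ η₁ t * η₂ t` is `n₁ n₂`-periodic, so the hypothesis says that it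
meets one period in fewer than `δ n₁ n₂` points. By the Chinese remainder theorem this count is
the sum over the residues `c` mod `n₂` of the number of `r` mod `n₁` with `φ r ≠ η₁ r * η₂ c`,
so some `c` contributes fewer than `δ n₁`; then `ξ = η₂ c` works, the factor `2` absorbing the
incomplete last period of `[1, N]` once `N ≥ n₁`.
-/

open Filter Finset Function

namespace Nat

variable {p : ℕ → Prop} [DecidablePred p] {a : ℕ}

theorem card_filter_Ico_add_mul_of_periodic (hp : Periodic p a) (n M : ℕ) :
    #{t ∈ Ico n (n + M * a) | p t} = M * count p a := by
  induction M with
  | zero => simp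
  | succ M ih =>
    rw [succ_mul, ← add_assoc,
      ← Ico_union_Ico_eq_Ico (le_add_right n (M * a)) (le_add_right _ a), filter_union,
      card_union_of_disjoint (disjoint_filter_filter (Ico_disjoint_Ico_consecutive _ _ _)), ih,
      filter_Ico_card_eq_of_periodic _ _ _ hp, succ_mul]

theorem card_filter_Icc_eq_of_periodic (hp : Periodic p a) (M : ℕ) :
    #{t ∈ Icc 1 (M * a) | p t} = M * count p a := by
  rw [← Finset.Ico_add_one_right_eq_Icc, add_comm, card_filter_Ico_add_mul_of_periodic hp]

theorem card_filter_Icc_le_of_periodic (hp : Periodic p a) (ha : 0 < a) (N : ℕ) :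
    #{t ∈ Icc 1 N | p t} ≤ (N / a + 1) * count p a := by
  have hN : N ≤ (N / a + 1) * a := by rw [add_one_mul]; exact (lt_div_mul_add ha).le
  rw [← card_filter_Icc_eq_of_periodic hp]
  exact card_le_card (filter_subset_filter _ (Icc_subset_Icc_right hN))

theorem count_lt_of_eventually_card_filter_Icc_lt (hp : Periodic p a) (ha : 0 < a) {δ : ℝ}
    (H : ∀ᶠ N : ℕ in atTop, (#{t ∈ Icc 1 N | p t} : ℝ) < δ * N) :
    (count p a : ℝ) < δ * a := by
  obtain ⟨N₀, hN₀⟩ := eventually_atTop.1 H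
  have hM := hN₀ ((N₀ + 1) * a) (le_mul_of_le_of_one_le (le_add_right N₀ 1) ha)
  rw [card_filter_Icc_eq_of_periodic hp] at hM
  push_cast at hM
  have : (0 : ℝ) < N₀ + 1 := by positivity
  nlinarith

theorem card_filter_Icc_lt_two_mul_of_count_lt (hp : Periodic p a) (ha : 0 < a) {δ : ℝ}
    (hcount : (count p a : ℝ) < δ * a) {N : ℕ} (hN : a ≤ N) :
    (#{t ∈ Icc 1 N | p t} : ℝ) < 2 * δ * N := by
  have hδ : 0 < δ :=
    pos_of_mul_pos_left ((Nat.cast_nonneg _).trans_lt hcount) (Nat.cast_nonneg a)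
  have hq : ((N / a : ℕ) : ℝ) * a ≤ N := by exact_mod_cast div_mul_le_self N a
  calc (#{t ∈ Icc 1 N | p t} : ℝ) ≤ ((N / a + 1 : ℕ) : ℝ) * count p a := by
        exact_mod_cast card_filter_Icc_le_of_periodic hp ha N
    _ < ((N / a + 1 : ℕ) : ℝ) * (δ * a) := by gcongr
    _ = δ * ((N / a : ℕ) * a + a) := by push_cast; ring
    _ ≤ δ * (N + N) := by gcongr
    _ = 2 * δ * N := by ring

variable {n₁ n₂ : ℕ}

theorem periodic_diag_mul {α : Type*} {f : ℕ → ℕ → α} (h₁ : ∀ c, Periodic (f · c) n₁)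
    (h₂ : ∀ r, Periodic (f r ·) n₂) : Periodic (fun t => f t t) (n₁ * n₂) := fun t => by
  have e₁ := (h₁ (t + n₁ * n₂)).nat_mul n₂ t
  have e₂ := (h₂ t).nat_mul n₁ t
  simp only [Nat.cast_id] at e₁ e₂
  rw [mul_comm] at e₁
  exact e₁.trans e₂

theorem card_filter_range_mul_eq_card_filter_product (hn₁ : n₁ ≠ 0) (hn₂ : n₂ ≠ 0)
    (hcop : n₁.Coprime n₂) (Q : ℕ → ℕ → Prop) [DecidableRel Q] :
    #{t ∈ range (n₁ * n₂) | Q (t % n₁) (t % n₂)} = #{x ∈ range n₁ ×ˢ range n₂ | Q x.1 x.2} := by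
  refine card_nbij (fun t => (t % n₁, t % n₂)) ?_ ?_ ?_
  · intro t ht
    simp only [coe_filter, mem_product, mem_range, Set.mem_ofPred_eq] at ht ⊢
    exact ⟨⟨mod_lt t (pos_of_ne_zero hn₁), mod_lt t (pos_of_ne_zero hn₂)⟩, ht.2⟩
  · intro t ht s hs hts
    simp only [coe_filter, mem_range, Set.mem_ofPred_eq, Prod.mk.injEq] at ht hs hts
    exact ((modEq_and_modEq_iff_modEq_mul hcop).1 hts).eq_of_lt_of_lt ht.1 hs.1
  · rintro ⟨r, c⟩ hrc
    simp only [coe_filter, mem_product, mem_range, Set.mem_ofPred_eq] at hrc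
    obtain ⟨⟨hr, hc⟩, hQ⟩ := hrc
    have hz₁ : chineseRemainder hcop r c % n₁ = r :=
      Eq.trans (chineseRemainder hcop r c).2.1 (mod_eq_of_lt hr)
    have hz₂ : chineseRemainder hcop r c % n₂ = c :=
      Eq.trans (chineseRemainder hcop r c).2.2 (mod_eq_of_lt hc)
    refine ⟨chineseRemainder hcop r c, ?_, by simp only [hz₁, hz₂]⟩
    simp only [coe_filter, mem_range, Set.mem_ofPred_eq, hz₁, hz₂]
    exact ⟨chineseRemainder_lt_mul hcop r c hn₁ hn₂, hQ⟩

theorem count_diag_eq_sum_count_of_coprime (hn₁ : n₁ ≠ 0) (hn₂ : n₂ ≠ 0)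
    (hcop : n₁.Coprime n₂) {P : ℕ → ℕ → Prop} [DecidableRel P]
    (h₁ : ∀ c, Periodic (P · c) n₁) (h₂ : ∀ r, Periodic (P r ·) n₂) :
    count (fun t => P t t) (n₁ * n₂) = ∑ c ∈ range n₂, count (P · c) n₁ := by
  have hmod : ∀ t, P t t = P (t % n₁) (t % n₂) := fun t => by
    rw [(h₁ _).map_mod_nat, (h₂ t).map_mod_nat]
  simp_rw [count_eq_card_filter_range, hmod,
    card_filter_range_mul_eq_card_filter_product hn₁ hn₂ hcop, card_filter, sum_product_right]

end Nat

theorem periodic_approx_factor_general (φ η₁ η₂ : ℤ → ℂ) (n₁ n₂ : ℕ)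
    (hn₁ : 0 < n₁) (hn₂ : 0 < n₂)
    (hη₂0 : ∀ t, η₂ t ≠ 0)
    (hφper : ∀ t, φ (t + n₁) = φ t)
    (hη₁per : ∀ t, η₁ (t + n₁) = η₁ t)
    (hη₂per : ∀ t, η₂ (t + n₂) = η₂ t)
    (hcop : Nat.Coprime n₁ n₂)
    (δ : ℝ)
    (H : ∀ᶠ N : ℕ in atTop,
      (((Finset.Icc 1 N).filter fun t : ℕ => φ (t : ℤ) ≠ η₁ (t : ℤ) * η₂ (t : ℤ)).card : ℝ) < δ * N) :
    ∃ ξ : ℂ, ξ ≠ 0 ∧ ∀ᶠ N : ℕ in atTop,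
      (((Finset.Icc 1 N).filter fun t : ℕ => φ (t : ℤ) ≠ ξ * η₁ (t : ℤ)).card : ℝ) < 2 * δ * N := by
  let P : ℕ → ℕ → Prop := fun r c => φ r ≠ η₁ r * η₂ c
  have h₁ : ∀ c, Periodic (P · c) n₁ := fun c r => by simp only [P, Nat.cast_add, hφper, hη₁per]
  have h₂ : ∀ r, Periodic (P r ·) n₂ := fun r c => by simp only [P, Nat.cast_add, hη₂per]
  have hcount := Nat.count_lt_of_eventually_card_filter_Icc_lt (Nat.periodic_diag_mul h₁ h₂)
    (Nat.mul_pos hn₁ hn₂) H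
  have hsum : ∑ c ∈ range n₂, (Nat.count (P · c) n₁ : ℝ) < ∑ _c ∈ range n₂, δ * n₁ := by
    rw [sum_const, card_range, nsmul_eq_mul, ← Nat.cast_sum,
      ← Nat.count_diag_eq_sum_count_of_coprime hn₁.ne' hn₂.ne' hcop h₁ h₂]
    push_cast at hcount
    linarith
  obtain ⟨c, -, hc⟩ := exists_lt_of_sum_lt hsum
  refine ⟨η₂ c, hη₂0 c, ?_⟩
  filter_upwards [eventually_ge_atTop n₁] with N hN
  simpa only [P, mul_comm (η₂ c)] using
    Nat.card_filter_Icc_lt_two_mul_of_count_lt (h₁ c) hn₁ hc hN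

theorem periodic_approx_factor (φ η₁ η₂ : ℤ → ℂ) (n₁ n₂ : ℕ)
    (hn₁ : 0 < n₁) (hn₂ : 0 < n₂)
    (hφ0 : ∀ t, φ t ≠ 0) (hη₁0 : ∀ t, η₁ t ≠ 0) (hη₂0 : ∀ t, η₂ t ≠ 0)
    (hφper : ∀ t, φ (t + n₁) = φ t)
    (hη₁per : ∀ t, η₁ (t + n₁) = η₁ t)
    (hη₂per : ∀ t, η₂ (t + n₂) = η₂ t)
    (hcop : Nat.Coprime n₁ n₂)
    (δ : ℝ) (hδ : 0 < δ)
    (H : ∀ᶠ N : ℕ in atTop,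
      (((Finset.Icc 1 N).filter fun t : ℕ => φ (t : ℤ) ≠ η₁ (t : ℤ) * η₂ (t : ℤ)).card : ℝ) < δ * N) :
    ∃ ξ : ℂ, ξ ≠ 0 ∧ ∀ᶠ N : ℕ in atTop,
      (((Finset.Icc 1 N).filter fun t : ℕ => φ (t : ℤ) ≠ ξ * η₁ (t : ℤ)).card : ℝ) < 2 * δ * N :=
  periodic_approx_factor_general φ η₁ η₂ n₁ n₂ hn₁ hn₂ hη₂0 hφper hη₁per hη₂per hcop δ H
end

section
/- Let φ : ℤ → ℂ∖{0} be periodic of period ℓ, and let η(t) = ∏_{i=1}^{k} h_{p_i}(t) where each h_{p_i} : ℤ → ℂ∖{0} is periodic of period p_i^{r_i} and p₁,…,p_k are distinct primes. Suppose that for all large enough N, the number of t ∈ {1,…,N} with φ(t) ≠ η(t) is less than N/(4ℓ²). Then there exist ρ ∈ ℂ∖{0} and, for each prime p dividing ℓ, a function h_p* : ℤ → ℂ periodic of period p^{v_p(ℓ)}, such that φ(t) = ρ·∏_{p | ℓ} h_p*(t) for all t ∈ ℤ. -/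
/-!
Choose a common period `M` of `φ` and `η` and work in `ℤ/M ≅ ∏_q ℤ/q^{v_q(M)}`. There `φ` is
invariant under the subgroup `K` of multiples of `ℓ`, which has index `ℓ` and is a product of
subgroups of the factors, while `η` is a product of functions of the single coordinates; the
density hypothesis makes `φ = η` outside a set `B` with `4 |B| < |K|`. For `x` supported on a set
`S` of coordinates and `y` supported off `S`, counting gives `z, w ∈ K` such that `x + z`, `y + w`
and the two points obtained from them by exchanging the coordinates outside `S` all avoid `B`.
The exchanged points lie in the cosets `x + y + K` and `K`, and `η` is a product over the
coordinates, so `φ(x + y) φ(0) = φ(x) φ(y)`. Splitting off one prime at a time gives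
`φ(t) = φ(0) ∏_q φ(t_q) / φ(0)`, where `t_q` is the `q`-primary component of `t` modulo `ℓ`.
-/

open Filter Finset Function

theorem Function.Periodic.map_val_intCast {α : Type*} {f : ℤ → α} {c : ℤ} (hf : Periodic f c)
    {n : ℕ} [NeZero n] (hc : c ∣ n) (t : ℤ) : f (t : ZMod n).val = f t := by
  obtain ⟨d, hd⟩ := hc
  rw [← hf.sub_int_mul_eq (x := t) (d * (t / n)), ZMod.val_intCast, Int.emod_def, hd, Int.cast_id]
  congr 1
  ring

theorem Nat.card_filter_Ico_mul_eq_of_periodic {p : ℕ → Prop} [DecidablePred p] {a : ℕ}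
    (hp : Periodic p a) (n k : ℕ) : #{t ∈ Ico n (n + a * k) | p t} = k * a.count p := by
  induction k with
  | zero => simp
  | succ k ih =>
    rw [mul_add_one, ← add_assoc,
      ← Ico_union_Ico_eq_Ico (Nat.le_add_right _ _) (Nat.le_add_right _ _), filter_union,
      card_union_of_disjoint (disjoint_filter_filter (Ico_disjoint_Ico_consecutive _ _ _)), ih,
      Nat.filter_Ico_card_eq_of_periodic _ _ _ hp, add_one_mul]

theorem Nat.mul_count_lt_of_eventually_card_filter_lt {p : ℕ → Prop} [DecidablePred p] {a : ℕ}
    (hp : Periodic p a) (ha : 0 < a) {c : ℝ} (hc : 0 < c)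
    (H : ∀ᶠ N : ℕ in atTop, (#{t ∈ Icc 1 N | p t} : ℝ) < N / c) : c * a.count p < a := by
  obtain ⟨N₀, hN₀⟩ := eventually_atTop.mp H
  have hk := hN₀ (a * (N₀ + 1)) (by nlinarith)
  rw [← Ico_add_one_right_eq_Icc, add_comm, Nat.card_filter_Ico_mul_eq_of_periodic hp,
    lt_div_iff₀ hc] at hk
  push_cast at hk
  nlinarith

theorem AddMonoidHom.card_le_card_ker_mul_card {G G' : Type*} [AddGroup G] [AddGroup G']
    [Fintype G] [Fintype G'] [DecidableEq G'] (Q : G →+ G') :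
    Fintype.card G ≤ #{x | Q x = 0} * Fintype.card G' := by
  rw [← Nat.card_eq_fintype_card, ← Q.ker.card_mul_index, AddSubgroup.index_ker,
    ← Nat.card_eq_fintype_card (α := G'), ← Fintype.card_subtype, ← Nat.card_eq_fintype_card]
  exact Nat.mul_le_mul le_rfl (Finite.card_subtype_le _)

theorem card_filter_mem_le_card_mul_card {β γ δ : Type*} [DecidableEq γ] {T : Finset β}
    {B : Finset γ} {K : Finset δ} (g : β → γ) (k : β → δ) (hk : ∀ τ ∈ T, k τ ∈ K)
    (hinj : Injective fun τ => (g τ, k τ)) : #{τ ∈ T | g τ ∈ B} ≤ #B * #K := by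
  rw [← card_product]
  refine card_le_card_of_injOn _ (fun τ hτ => ?_) hinj.injOn
  obtain ⟨hτT, hτB⟩ := mem_filter.mp hτ
  exact mem_product.mpr ⟨hτB, hk τ hτT⟩

theorem Finset.piecewise_swap_injective {ι : Type*} {π : ι → Type*} (S : Finset ι)
    [∀ i, Decidable (i ∈ S)] :
    Injective fun zw : (Π i, π i) × (Π i, π i) =>
      (S.piecewise zw.1 zw.2, S.piecewise zw.2 zw.1) := by
  rintro ⟨z, w⟩ ⟨z', w'⟩ h
  obtain ⟨h₁, h₂⟩ := Prod.mk.inj h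
  ext i <;> by_cases hi : i ∈ S
  all_goals first | simpa [hi] using congr_fun h₁ i | simpa [hi] using congr_fun h₂ i

section Rigidity

variable {ι : Type*} [Fintype ι] [DecidableEq ι] {A : ι → Type*} [∀ i, AddCommGroup (A i)]
  [∀ i, DecidableEq (A i)] {α : Type*} [CommMonoid α]

theorem exists_translates_notMem_of_four_mul_card_lt {B K : Finset (Π i, A i)}
    (hKpw : ∀ S : Finset ι, ∀ z ∈ K, ∀ w ∈ K, S.piecewise z w ∈ K) (hBK : 4 * #B < #K)
    (S : Finset ι) (a b x : Π i, A i) :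
    ∃ z ∈ K, ∃ w ∈ K, a + z ∉ B ∧ b + w ∉ B ∧ x + S.piecewise z w ∉ B ∧
      S.piecewise w z ∉ B := by
  set T := K ×ˢ K
  have hT : ∀ τ ∈ T, τ.1 ∈ K ∧ τ.2 ∈ K := fun τ hτ => mem_product.mp hτ
  have hswap := S.piecewise_swap_injective (π := A)
  -- Each of the four conditions on `(z, w) ∈ K × K` fails for at most `#B * #K` pairs.
  have hbad : #({τ ∈ T | a + τ.1 ∈ B} ∪ {τ ∈ T | b + τ.2 ∈ B} ∪
      {τ ∈ T | x + S.piecewise τ.1 τ.2 ∈ B} ∪ {τ ∈ T | S.piecewise τ.2 τ.1 ∈ B}) < #T := by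
    have h₁ := card_filter_mem_le_card_mul_card (T := T) (B := B) (fun τ => a + τ.1) Prod.snd
      (fun τ hτ => (hT τ hτ).2) (Prod.map_injective.mpr ⟨add_right_injective a, injective_id⟩)
    have h₂ := card_filter_mem_le_card_mul_card (T := T) (B := B) (fun τ => b + τ.2) Prod.fst
      (fun τ hτ => (hT τ hτ).1)
      ((Prod.map_injective.mpr ⟨add_right_injective b, injective_id⟩).comp Prod.swap_injective)
    have h₃ := card_filter_mem_le_card_mul_card (T := T) (B := B)
      (fun τ => x + S.piecewise τ.1 τ.2) (fun τ => S.piecewise τ.2 τ.1)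
      (fun τ hτ => hKpw S _ (hT τ hτ).2 _ (hT τ hτ).1)
      ((Prod.map_injective.mpr ⟨add_right_injective x, injective_id⟩).comp hswap)
    have h₄ := card_filter_mem_le_card_mul_card (T := T) (B := B)
      (fun τ => S.piecewise τ.2 τ.1) (fun τ => S.piecewise τ.1 τ.2)
      (fun τ hτ => hKpw S _ (hT τ hτ).1 _ (hT τ hτ).2) (Prod.swap_injective.comp hswap)
    have hTcard : #T = #K * #K := card_product K K
    refine (card_union_le _ _).trans_lt ?_
    grw [card_union_le, card_union_le, h₁, h₂, h₃, h₄, hTcard]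
    nlinarith
  obtain ⟨⟨z, w⟩, hzw, hgood⟩ := exists_mem_notMem_of_card_lt_card hbad
  simp only [mem_union, mem_filter, not_or, not_and] at hgood
  obtain ⟨⟨⟨h₁, h₂⟩, h₃⟩, h₄⟩ := hgood
  exact ⟨z, (hT _ hzw).1, w, (hT _ hzw).2, h₁ hzw, h₂ hzw, h₃ hzw, h₄ hzw⟩

theorem mul_apply_zero_eq_apply_piecewise_mul (f : (Π i, A i) → α) (c : Π i, A i → α)
    {B K : Finset (Π i, A i)} (hB : ∀ x ∉ B, f x = ∏ i, c i (x i))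
    (hK : ∀ x, ∀ k ∈ K, f (x + k) = f x)
    (hKpw : ∀ S : Finset ι, ∀ z ∈ K, ∀ w ∈ K, S.piecewise z w ∈ K) (hBK : 4 * #B < #K)
    (S : Finset ι) (x : Π i, A i) :
    f x * f 0 = f (S.piecewise x 0) * f (S.piecewise 0 x) := by
  set a := S.piecewise x 0
  set b := S.piecewise (0 : Π i, A i) x
  obtain ⟨z, hz, w, hw, h₁, h₂, h₃, h₄⟩ :=
    exists_translates_notMem_of_four_mul_card_lt hKpw hBK S a b x
  calc f x * f 0 = f (x + S.piecewise z w) * f (0 + S.piecewise w z) := by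
        rw [hK _ _ (hKpw S z hz w hw), hK _ _ (hKpw S w hw z hz)]
    _ = f (a + z) * f (b + w) := by
        rw [hB _ h₃, zero_add, hB _ h₄, hB _ h₁, hB _ h₂, ← prod_mul_distrib, ← prod_mul_distrib]
        refine prod_congr rfl fun i _ => ?_
        by_cases hi : i ∈ S <;> simp [a, b, hi, mul_comm]
    _ = f a * f b := by rw [hK _ _ hz, hK _ _ hw]

theorem mul_apply_zero_pow_eq_prod_single (f : (Π i, A i) → α) (c : Π i, A i → α)
    {B K : Finset (Π i, A i)} (hB : ∀ x ∉ B, f x = ∏ i, c i (x i))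
    (hK : ∀ x, ∀ k ∈ K, f (x + k) = f x)
    (hKpw : ∀ S : Finset ι, ∀ z ∈ K, ∀ w ∈ K, S.piecewise z w ∈ K) (hBK : 4 * #B < #K)
    (x : Π i, A i) :
    f x * f 0 ^ Fintype.card ι = f 0 * ∏ i, f (Pi.single i (x i)) := by
  suffices ∀ S : Finset ι,
      f (S.piecewise x 0) * f 0 ^ #S = f 0 * ∏ i ∈ S, f (Pi.single i (x i)) by
    simpa using this univ
  intro S
  induction S using Finset.induction_on with
  | empty => simp [mul_comm]
  | insert j S hj ih =>
    have hsplit := mul_apply_zero_eq_apply_piecewise_mul f c hB hK hKpw hBK {j}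
      ((insert j S).piecewise x 0)
    have hj' : ({j} : Finset ι).piecewise ((insert j S).piecewise x 0) 0 =
        Pi.single j (x j) := by
      ext i
      by_cases hi : i = j
      · subst hi; simp
      · simp [hi]
    have hS : ({j} : Finset ι).piecewise (0 : Π i, A i) ((insert j S).piecewise x 0) =
        S.piecewise x 0 := by
      ext i
      by_cases hi : i = j
      · subst hi; simp [hj]
      · simp [hi]
    rw [hj', hS] at hsplit
    rw [card_insert_of_notMem hj, prod_insert hj, pow_succ', ← mul_assoc, hsplit, mul_assoc, ih]
    exact mul_left_comm _ _ _

end Rigidity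

instance (n : ℕ) (q : n.primeFactors) : NeZero (q : ℕ) :=
  ⟨(Nat.prime_of_mem_primeFactors q.2).ne_zero⟩

/-- The codomain of the Chinese remainder theorem `ZMod.equivPi n`. -/
abbrev PrimePowPi (n : ℕ) : Type := Π q : n.primeFactors, ZMod ((q : ℕ) ^ n.factorization q)

theorem exists_prod_eq_prod_primeFactors_of_periodic {α : Type*} [CommMonoid α] {ι : Type*}
    [Fintype ι] {M : ℕ} (hM : M ≠ 0) (p r : ι → ℕ) (hp : ∀ i, (p i).Prime)
    (hpM : ∀ i, p i ^ (r i + 1) ∣ M) (h : ι → ℤ → α)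
    (hh : ∀ i, Periodic (h i) ((p i : ℤ) ^ r i)) :
    ∃ c : Π q : M.primeFactors, ZMod ((q : ℕ) ^ M.factorization q) → α,
      ∀ t : ℤ, ∏ i, h i t = ∏ q, c q t := by
  classical
  have hmem : ∀ i, p i ∈ M.primeFactors := fun i =>
    Nat.mem_primeFactors.mpr ⟨hp i, (dvd_pow_self _ (Nat.succ_ne_zero _)).trans (hpM i), hM⟩
  let g : ι → M.primeFactors := fun i => ⟨p i, hmem i⟩
  refine ⟨fun q u => ∏ i with g i = q, h i u.val, fun t => ?_⟩
  rw [← prod_fiberwise univ g]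
  refine prod_congr rfl fun q _ => prod_congr rfl fun i hi => ?_
  have hq : (q : ℕ) = p i := congrArg Subtype.val (mem_filter.mp hi).2.symm
  refine ((hh i).map_val_intCast ?_ t).symm
  have hr : r i < M.factorization (p i) := ((hp i).pow_dvd_iff_le_factorization hM).mp (hpM i)
  rw [hq]
  exact_mod_cast pow_dvd_pow (p i) hr.le

theorem PrimePowPi.periodic_prod_intCast {α : Type*} [CommMonoid α] {M : ℕ}
    (c : Π q : M.primeFactors, ZMod ((q : ℕ) ^ M.factorization q) → α) :
    Periodic (fun t : ℤ => ∏ q, c q t) M := fun t => by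
  refine prod_congr rfl fun q _ => ?_
  rw [Int.cast_add, Int.cast_natCast, (ZMod.natCast_eq_zero_iff _ _).mpr (Nat.ordProj_dvd _ _),
    add_zero]

noncomputable def PrimePowPi.reduction {ℓ M : ℕ} (hℓ : ℓ ≠ 0) (hM : M ≠ 0) (h : ℓ ∣ M) :
    PrimePowPi M →+* PrimePowPi ℓ :=
  RingHom.pi fun q =>
    (ZMod.castHom (pow_dvd_pow _ ((Nat.factorization_le_iff_dvd hℓ hM).mpr h q)) _).comp
      (Pi.evalRingHom (fun q : M.primeFactors => ZMod ((q : ℕ) ^ M.factorization q))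
        ⟨q, Nat.primeFactors_mono h hM q.2⟩)

theorem PrimePowPi.reduction_single_intCast {ℓ M : ℕ} (hℓ : ℓ ≠ 0) (hM : M ≠ 0) (h : ℓ ∣ M)
    (j : M.primeFactors) (t : ℤ) :
    PrimePowPi.reduction hℓ hM h (Pi.single j (t : ZMod _)) =
      fun q : ℓ.primeFactors => if (q : ℕ) = j then (t : ZMod _) else 0 := by
  ext q
  by_cases hq : (q : ℕ) = j
  · obtain rfl : (⟨q, Nat.primeFactors_mono h hM q.2⟩ : M.primeFactors) = j := Subtype.ext hq
    simp [PrimePowPi.reduction]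
  · have hq' : (⟨q, Nat.primeFactors_mono h hM q.2⟩ : M.primeFactors) ≠ j :=
      fun h' => hq (congrArg Subtype.val h')
    simp [PrimePowPi.reduction, hq, hq']

theorem PrimePowPi.reduction_piecewise_eq_zero {ℓ M : ℕ} (hℓ : ℓ ≠ 0) (hM : M ≠ 0) (h : ℓ ∣ M)
    (S : Finset M.primeFactors) {z w : PrimePowPi M}
    (hz : PrimePowPi.reduction hℓ hM h z = 0) (hw : PrimePowPi.reduction hℓ hM h w = 0) :
    PrimePowPi.reduction hℓ hM h (S.piecewise z w) = 0 := by
  ext q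
  by_cases hq : (⟨q, Nat.primeFactors_mono h hM q.2⟩ : M.primeFactors) ∈ S
  · simpa [PrimePowPi.reduction, hq] using congr_fun hz q
  · simpa [PrimePowPi.reduction, hq] using congr_fun hw q

theorem PrimePowPi.card_le_card_ker_reduction_mul {ℓ M : ℕ} (hℓ : ℓ ≠ 0) (hM : M ≠ 0)
    (h : ℓ ∣ M) : M ≤ #{k | PrimePowPi.reduction hℓ hM h k = 0} * ℓ := by
  have : NeZero M := ⟨hM⟩
  have : NeZero ℓ := ⟨hℓ⟩
  have := (PrimePowPi.reduction hℓ hM h).toAddMonoidHom.card_le_card_ker_mul_card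
  rwa [← Fintype.card_congr (ZMod.equivPi M hM).toEquiv,
    ← Fintype.card_congr (ZMod.equivPi ℓ hℓ).toEquiv, ZMod.card, ZMod.card] at this

theorem PrimePowPi.card_filter_le_card_filter_range {M : ℕ} (hM : M ≠ 0)
    (P : PrimePowPi M → Prop) [DecidablePred P] :
    #{x | P x} ≤ #{t ∈ range M | P ((t : ℕ) : ℤ)} := by
  have : NeZero M := ⟨hM⟩
  refine (card_le_card fun x hx => ?_).trans (card_image_le (f := fun t : ℕ =>
    ((t : ℤ) : PrimePowPi M)))
  have hx' : ((((ZMod.equivPi M hM).symm x).val : ℤ) : _) = x := by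
    rw [Int.cast_natCast, ← map_natCast (ZMod.equivPi M hM), ZMod.natCast_zmod_val,
      RingEquiv.apply_symm_apply]
  refine mem_image.mpr ⟨_, mem_filter.mpr ⟨mem_range.mpr (ZMod.val_lt _), ?_⟩, hx'⟩
  rw [hx']
  exact (mem_filter.mp hx).2

/-- `φ` at the residue modulo `ℓ` that is `≡ t` modulo `q ^ v_q(ℓ)` and `≡ 0` modulo the other
prime powers of `ℓ`. -/
noncomputable def primaryPart {α : Type*} {ℓ : ℕ} (hℓ : ℓ ≠ 0) (φ : ℤ → α) (q : ℕ) (t : ℤ) :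
    α :=
  φ ((ZMod.equivPi ℓ hℓ).symm fun q' => if (q' : ℕ) = q then (t : ZMod _) else 0).val

theorem primaryPart_of_notMem {α : Type*} {ℓ : ℕ} (hℓ : ℓ ≠ 0) (φ : ℤ → α) {q : ℕ}
    (hq : q ∉ ℓ.primeFactors) (t : ℤ) : primaryPart hℓ φ q t = φ 0 := by
  have hzero : (fun q' : ℓ.primeFactors =>
      if (q' : ℕ) = q then (t : ZMod ((q' : ℕ) ^ ℓ.factorization q')) else 0) = 0 := by
    ext q'
    have : (q' : ℕ) ≠ q := fun h => hq (h ▸ q'.2)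
    simp [this]
  simp [primaryPart, hzero]

theorem primaryPart_periodic {α : Type*} {ℓ : ℕ} (hℓ : ℓ ≠ 0) (φ : ℤ → α) (q : ℕ) :
    Periodic (primaryPart hℓ φ q) ((q : ℤ) ^ ℓ.factorization q) := by
  intro t
  unfold primaryPart
  congr 4
  ext q'
  split_ifs with hq
  · subst hq
    rw [Int.cast_add, add_eq_left]
    exact_mod_cast ZMod.natCast_self _
  · rfl

theorem eq_mul_prod_primaryPart_of_card_lt {ℓ M : ℕ} (hℓ : ℓ ≠ 0) (hM : M ≠ 0) (hℓM : ℓ ∣ M)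
    {φ : ℤ → ℂ} (hφ : Periodic φ ℓ) (hφ0 : φ 0 ≠ 0)
    (c : Π q : M.primeFactors, ZMod ((q : ℕ) ^ M.factorization q) → ℂ)
    (hdens : 4 * ℓ * #{t ∈ range M | φ ((t : ℕ) : ℤ) ≠ ∏ q, c q ((t : ℕ) : ℤ)} < M) (t : ℤ) :
    φ t = φ 0 * ∏ q ∈ ℓ.primeFactors, primaryPart hℓ φ q t / φ 0 := by
  classical
  have : NeZero ℓ := ⟨hℓ⟩
  set Q := PrimePowPi.reduction hℓ hM hℓM
  set f : PrimePowPi M → ℂ :=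
    fun x => φ ((ZMod.equivPi ℓ hℓ).symm (Q x)).val
  have hf : ∀ s : ℤ, f s = φ s := fun s => by
    simp only [f, map_intCast]
    exact hφ.map_val_intCast dvd_rfl s
  set B := univ.filter fun x => f x ≠ ∏ q, c q (x q)
  set K := univ.filter fun k => Q k = 0
  have hBK : 4 * #B < #K := by
    have hB : #B ≤ #{t ∈ range M | φ ((t : ℕ) : ℤ) ≠ ∏ q, c q ((t : ℕ) : ℤ)} := by
      simpa only [hf, Pi.intCast_apply] using
        PrimePowPi.card_filter_le_card_filter_range hM fun x => f x ≠ ∏ q, c q (x q)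
    have hK : M ≤ #K * ℓ := PrimePowPi.card_le_card_ker_reduction_mul hℓ hM hℓM
    by_contra! hKB
    nlinarith [Nat.mul_le_mul_left ℓ hKB, Nat.mul_le_mul_left ℓ hB]
  have key := mul_apply_zero_pow_eq_prod_single f c
    (fun x hx => not_not.mp fun h => hx (mem_filter.mpr ⟨mem_univ x, h⟩))
    (fun x k hk => by simp only [f, map_add, (mem_filter.mp hk).2, add_zero])
    (fun S z hz w hw => by
      simp only [K, mem_filter, mem_univ, true_and] at hz hw ⊢
      exact PrimePowPi.reduction_piecewise_eq_zero hℓ hM hℓM S hz hw)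
    hBK (t : _)
  have hsingle : ∀ j : M.primeFactors, f (Pi.single j (t : ZMod _)) = primaryPart hℓ φ j t :=
    fun j => by
      simp only [f, Q, PrimePowPi.reduction_single_intCast]
      rfl
  simp only [Pi.intCast_apply, hf, hsingle, show f 0 = φ 0 by simpa using hf 0] at key
  rw [prod_subset (Nat.primeFactors_mono hℓM hM) fun q _ hq => by
      rw [primaryPart_of_notMem hℓ φ hq, div_self hφ0],
    ← prod_coe_sort, prod_div_distrib, prod_const, card_univ]
  field_simp
  linear_combination key

theorem periodic_prime_factorization_general (ℓ : ℕ) (hℓ : 0 < ℓ)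
    (φ : ℤ → ℂ) (hφ0 : ∀ t, φ t ≠ 0) (hφper : ∀ t, φ (t + ℓ) = φ t)
    (g : ℕ) (p : Fin g → ℕ) (r : Fin g → ℕ)
    (hp : ∀ i, (p i).Prime)
    (h : Fin g → ℤ → ℂ)
    (hhper : ∀ i t, h i (t + (p i) ^ (r i)) = h i t)
    (H : ∀ᶠ N : ℕ in atTop,
      (((Finset.Icc 1 N).filter
        fun t : ℕ => φ (t : ℤ) ≠ ∏ i, h i (t : ℤ)).card : ℝ) < N / (4 * (ℓ : ℝ) ^ 2)) :
    ∃ ρ : ℂ, ρ ≠ 0 ∧ ∃ H' : ℕ → ℤ → ℂ,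
      (∀ q ∈ ℓ.primeFactors, ∀ t, H' q (t + (q : ℤ) ^ (ℓ.factorization q)) = H' q t) ∧
      ∀ t, φ t = ρ * ∏ q ∈ ℓ.primeFactors, H' q t := by
  classical
  -- The extra factor of each `p i` makes it a prime factor of the common period `ℓ * P`.
  set P := ∏ i, p i ^ (r i + 1)
  have hM : ℓ * P ≠ 0 :=
    mul_ne_zero hℓ.ne' (prod_ne_zero_iff.mpr fun i _ => pow_ne_zero _ (hp i).ne_zero)
  obtain ⟨c, hc⟩ := exists_prod_eq_prod_primeFactors_of_periodic hM p r hp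
    (fun i => (dvd_prod_of_mem (fun i => p i ^ (r i + 1)) (mem_univ i)).trans (dvd_mul_left _ _))
    h fun i => hhper i
  have hφM : Periodic φ ((ℓ * P : ℕ) : ℤ) := by
    rw [Nat.cast_mul, mul_comm]
    exact Periodic.nat_mul hφper P
  set bad := fun t : ℕ => φ t ≠ ∏ q, c q (t : ℤ)
  have hbad : Periodic bad (ℓ * P) := fun t => by
    simp only [bad, Nat.cast_add, hφM t, PrimePowPi.periodic_prod_intCast c t]
  have hcount : 4 * ℓ ^ 2 * (ℓ * P).count bad < ℓ * P := by
    exact_mod_cast Nat.mul_count_lt_of_eventually_card_filter_lt hbad (Nat.pos_of_ne_zero hM)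
      (by positivity : (0 : ℝ) < 4 * (ℓ : ℝ) ^ 2) (by simpa only [hc] using H)
  refine ⟨φ 0, hφ0 0, fun q t => primaryPart hℓ.ne' φ q t / φ 0, fun q _ t => ?_, fun t => ?_⟩
  · simp only [primaryPart_periodic hℓ.ne' φ q t]
  refine eq_mul_prod_primaryPart_of_card_lt hℓ.ne' hM (dvd_mul_right _ _) hφper (hφ0 0) c ?_ t
  rw [← Nat.count_eq_card_filter_range]
  calc _ ≤ 4 * ℓ ^ 2 * (ℓ * P).count bad := by gcongr; exact Nat.le_self_pow two_ne_zero ℓ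
    _ < ℓ * P := hcount

theorem periodic_prime_factorization (ℓ : ℕ) (hℓ : 0 < ℓ)
    (φ : ℤ → ℂ) (hφ0 : ∀ t, φ t ≠ 0) (hφper : ∀ t, φ (t + ℓ) = φ t)
    (g : ℕ) (p : Fin g → ℕ) (r : Fin g → ℕ)
    (hp : ∀ i, (p i).Prime) (hpinj : Function.Injective p)
    (h : Fin g → ℤ → ℂ) (hh0 : ∀ i t, h i t ≠ 0)
    (hhper : ∀ i t, h i (t + (p i) ^ (r i)) = h i t)
    (H : ∀ᶠ N : ℕ in atTop,
      (((Finset.Icc 1 N).filter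
        fun t : ℕ => φ (t : ℤ) ≠ ∏ i, h i (t : ℤ)).card : ℝ) < N / (4 * (ℓ : ℝ) ^ 2)) :
    ∃ ρ : ℂ, ρ ≠ 0 ∧ ∃ H' : ℕ → ℤ → ℂ,
      (∀ q ∈ ℓ.primeFactors, ∀ t, H' q (t + (q : ℤ) ^ (ℓ.factorization q)) = H' q t) ∧
      ∀ t, φ t = ρ * ∏ q ∈ ℓ.primeFactors, H' q t :=
  periodic_prime_factorization_general ℓ hℓ φ hφ0 hφper g p r hp h hhper H
end

section
/- Let p be a prime, and let ℓ, u ≥ 1 and 0 ≤ m ≤ p^ℓ be integers. Then there exist arbitrarily large integers r ≥ 0 and a polynomial P ∈ ℤ[t] such that the number of residue classes t modulo p^{r+ℓ} with p^{r+ℓ} dividing P(t) is exactly m·p^r, and v_p(P(t)) ≤ r + ℓ − u whenever t is not in one of these residue classes. -/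
/-!
Write `m < p ^ ℓ` in base `p` and cover the required classes by pairwise disjoint balls:
`d_i` classes modulo `p ^ (ℓ - i)` for the digit `d_i` of `p ^ i`. Take `P` to be a power of `p`
times `∏ (t - c) ^ k` over their centers `c`. On the ball `c_x + p ^ n_x ℤ` the valuation of the
product is at least `A_x = k_x n_x + ∑_{y ≠ x} k_y v(c_x - c_y)`, while at a point outside all
balls, comparing with the nearest center `c_x` shows that it is at most `A_x - k_x`. When the
exponents grow geometrically with the size of the ball, `A_y - k_y + u ≤ A_x` for all `x, y`, so
the power of `p` can be chosen to put `p ^ (r + ℓ)` between the two regimes.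
-/

open Finset Polynomial

theorem Nat.sum_range_div_pow_mod_mul_pow (b m n : ℕ) :
    ∑ i ∈ range n, m / b ^ i % b * b ^ i = m % b ^ n := by
  induction n with
  | zero => simp [Nat.mod_one]
  | succ n ih => rw [sum_range_succ, ih, Nat.mod_pow_succ, mul_comm (m / b ^ n % b)]

theorem sum_range_reverse_digit_mul_pow {p m ℓ : ℕ} (hm : m < p ^ ℓ) (r : ℕ) :
    ∑ s ∈ range ℓ, m / p ^ (ℓ - 1 - s) % p * p ^ (r + ℓ - (s + 1)) = m * p ^ r := by
  rw [← sum_range_reflect]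
  have hterm : ∀ s ∈ range ℓ, m / p ^ (ℓ - 1 - (ℓ - 1 - s)) % p * p ^ (r + ℓ - (ℓ - 1 - s + 1))
      = m / p ^ s % p * p ^ s * p ^ r := by
    intro s hs
    have := mem_range.mp hs
    rw [show ℓ - 1 - (ℓ - 1 - s) = s by omega, show r + ℓ - (ℓ - 1 - s + 1) = s + r by omega,
      pow_add, mul_assoc]
  rw [sum_congr rfl hterm, ← sum_mul, Nat.sum_range_div_pow_mod_mul_pow, Nat.mod_eq_of_lt hm]

theorem card_filter_range_dvd_sub {q b : ℕ} (hq : 0 < q) (hqb : q ∣ b) (z : ℤ) :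
    ((range b).filter fun t : ℕ => (q : ℤ) ∣ t - z).card = b / q := by
  obtain ⟨v, hv⟩ : ∃ v : ℕ, (q : ℤ) ∣ v - z :=
    ⟨(z % q).toNat, by
      rw [Int.toNat_of_nonneg (Int.emod_nonneg _ (by omega))]
      exact (Int.mod_modEq z q).symm.dvd⟩
  have hfilter :
      ((range b).filter fun t : ℕ => (q : ℤ) ∣ t - z) = {t ∈ range b | t ≡ v [MOD q]} := by
    refine filter_congr fun t _ => ?_
    rw [Nat.ModEq.comm, Nat.modEq_iff_dvd, show (t : ℤ) - z = t - v + (v - z) by ring,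
      dvd_add_left hv]
  rw [hfilter, ← Nat.count_eq_card_filter_range, Nat.count_modEq_card _ hq,
    Nat.mod_eq_zero_of_dvd hqb]
  simp

section PadicVal

variable {p : ℕ} [Fact p.Prime]

theorem padicValInt_eq_of_pow_dvd_of_not_pow_succ_dvd {a : ℤ} {s : ℕ} (h : (p : ℤ) ^ s ∣ a)
    (h' : ¬ (p : ℤ) ^ (s + 1) ∣ a) : padicValInt p a = s := by
  have ha : a ≠ 0 := by rintro rfl; exact h' (dvd_zero _)
  rw [padicValInt_dvd_iff] at h h'
  simp only [ha, false_or] at h h'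
  omega

theorem ne_zero_and_padicValInt_lt_of_not_pow_dvd {a : ℤ} {s : ℕ} (h : ¬ (p : ℤ) ^ s ∣ a) :
    a ≠ 0 ∧ padicValInt p a < s := by
  rw [padicValInt_dvd_iff] at h
  push Not at h
  exact h

theorem padicValInt_prime_pow (s : ℕ) : padicValInt p ((p : ℤ) ^ s) = s := by
  simp [padicValInt, Int.natAbs_pow]

theorem padicValInt_prod_pow {ι : Type*} (I : Finset ι) {f : ι → ℤ} (k : ι → ℕ)
    (hf : ∀ x ∈ I, f x ≠ 0) :
    padicValInt p (∏ x ∈ I, f x ^ k x) = ∑ x ∈ I, k x * padicValInt p (f x) := by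
  have hp : p.Prime := Fact.out
  have hnatAbs : (∏ x ∈ I, f x ^ k x).natAbs = ∏ x ∈ I, (f x).natAbs ^ k x := by
    simp only [← Int.natAbsHom_apply, map_prod, map_pow]
  simp only [padicValInt, ← Nat.factorization_def _ hp, hnatAbs]
  rw [Nat.factorization_prod fun x hx => pow_ne_zero _ (Int.natAbs_ne_zero.mpr (hf x hx))]
  simp [Nat.factorization_pow]

end PadicVal

section Balls

variable {ι : Type*} {p : ℕ} {I : Finset ι} {c : ι → ℤ} {n : ι → ℕ}

def BallsPairwiseDisjoint (p : ℕ) (I : Finset ι) (c : ι → ℤ) (n : ι → ℕ) : Prop :=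
  ∀ x ∈ I, ∀ y ∈ I, x ≠ y → ¬ (p : ℤ) ^ n x ∣ c x - c y

theorem card_filter_exists_pow_dvd_sub (hp : 0 < p) (hI : BallsPairwiseDisjoint p I c n)
    {R : ℕ} (hn : ∀ x ∈ I, n x ≤ R) :
    ((range (p ^ R)).filter fun t : ℕ => ∃ x ∈ I, (p : ℤ) ^ n x ∣ t - c x).card
      = ∑ x ∈ I, p ^ (R - n x) := by
  have hunion : ((range (p ^ R)).filter fun t : ℕ => ∃ x ∈ I, (p : ℤ) ^ n x ∣ t - c x)
      = I.biUnion fun x => (range (p ^ R)).filter fun t : ℕ => (p : ℤ) ^ n x ∣ t - c x := by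
    ext t
    simp only [mem_filter, mem_biUnion]
    tauto
  rw [hunion, card_biUnion]
  · refine sum_congr rfl fun x hx => ?_
    have h := card_filter_range_dvd_sub (pow_pos hp (n x)) (pow_dvd_pow p (hn x hx)) (c x)
    push_cast at h
    rw [h, Nat.pow_div (hn x hx) hp]
  · intro x hx y hy hxy
    refine disjoint_left.mpr fun t htx hty => ?_
    obtain ⟨-, htx⟩ := mem_filter.mp htx
    obtain ⟨-, hty⟩ := mem_filter.mp hty
    have hsub : c x - c y = (t - c y) - (t - c x) := by ring
    rcases le_total (n x) (n y) with h | h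
    · exact hI x hx y hy hxy (hsub ▸ dvd_sub ((pow_dvd_pow _ h).trans hty) htx)
    · refine hI y hy x hx hxy.symm ?_
      rw [← dvd_neg, neg_sub, hsub]
      exact dvd_sub hty ((pow_dvd_pow _ h).trans htx)

variable [DecidableEq ι]

/-- On the ball `c x + p ^ n x ℤ`, each factor `t - c y` with `y ≠ x` has valuation exactly
`v(c x - c y)`. -/
def ballOrder (p : ℕ) (I : Finset ι) (c : ι → ℤ) (n k : ι → ℕ) (x : ι) : ℕ :=
  k x * n x + ∑ y ∈ I.erase x, k y * padicValInt p (c x - c y)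

variable [Fact p.Prime]

theorem pow_ballOrder_dvd_prod (hI : BallsPairwiseDisjoint p I c n) (k : ι → ℕ) {x : ι}
    (hx : x ∈ I) {t : ℤ} (ht : (p : ℤ) ^ n x ∣ t - c x) :
    (p : ℤ) ^ ballOrder p I c n k x ∣ ∏ y ∈ I, (t - c y) ^ k y := by
  rw [← mul_prod_erase I _ hx, ballOrder, pow_add, ← prod_pow_eq_pow_sum, pow_mul']
  refine mul_dvd_mul (pow_dvd_pow_of_dvd ht _) (prod_dvd_prod_of_dvd _ _ fun y hy => ?_)
  obtain ⟨hyx, hy⟩ := mem_erase.mp hy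
  obtain ⟨-, hlt⟩ := ne_zero_and_padicValInt_lt_of_not_pow_dvd (hI x hx y hy hyx.symm)
  rw [pow_mul', show t - c y = (t - c x) + (c x - c y) by ring]
  exact pow_dvd_pow_of_dvd (dvd_add ((pow_dvd_pow _ hlt.le).trans ht) (padicValInt_dvd _)) _

theorem exists_padicValInt_prod_add_le (hI : BallsPairwiseDisjoint p I c n) (k : ι → ℕ)
    (hne : I.Nonempty) {t : ℤ} (ht : ∀ x ∈ I, ¬ (p : ℤ) ^ n x ∣ t - c x) :
    ∃ x ∈ I, padicValInt p (∏ y ∈ I, (t - c y) ^ k y) + k x ≤ ballOrder p I c n k x := by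
  obtain ⟨x, hx, hmax⟩ := exists_max_image I (fun y => padicValInt p (t - c y)) hne
  -- `c x` is a center closest to `t`, so `t - c y` is no more divisible than `c x - c y`.
  have hfar : ∀ y ∈ I.erase x, padicValInt p (t - c y) ≤ padicValInt p (c x - c y) := by
    intro y hy
    obtain ⟨hyx, hy⟩ := mem_erase.mp hy
    obtain ⟨hxy, -⟩ := ne_zero_and_padicValInt_lt_of_not_pow_dvd (hI x hx y hy hyx.symm)
    by_contra! hlt
    have hty : (p : ℤ) ^ (padicValInt p (c x - c y) + 1) ∣ t - c y :=
      (padicValInt_dvd_iff _ _).2 (Or.inr hlt)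
    have htx : (p : ℤ) ^ (padicValInt p (c x - c y) + 1) ∣ t - c x :=
      (padicValInt_dvd_iff _ _).2 (Or.inr (hlt.trans_le (hmax y hy)))
    have h := dvd_sub hty htx
    rw [show t - c y - (t - c x) = c x - c y by ring, padicValInt_dvd_iff] at h
    omega
  have hnear : padicValInt p (t - c x) + 1 ≤ n x :=
    (ne_zero_and_padicValInt_lt_of_not_pow_dvd (ht x hx)).2
  refine ⟨x, hx, ?_⟩
  rw [padicValInt_prod_pow I k fun y hy => (ne_zero_and_padicValInt_lt_of_not_pow_dvd (ht y hy)).1,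
    ← add_sum_erase I _ hx, ballOrder]
  have hsum := sum_le_sum fun y hy => Nat.mul_le_mul_left (k y) (hfar y hy)
  have hx' := Nat.mul_le_mul_left (k x) hnear
  rw [Nat.mul_add] at hx'
  omega

variable {k : ι → ℕ} {u T R : ℕ}

theorem pow_dvd_eval_of_mem_ball (hI : BallsPairwiseDisjoint p I c n) (hTR : T ≤ R)
    (hT : ∀ x ∈ I, T ≤ ballOrder p I c n k x) {x : ι} (hx : x ∈ I) {t : ℤ}
    (ht : (p : ℤ) ^ n x ∣ t - c x) :
    (p : ℤ) ^ R ∣ (C ((p : ℤ) ^ (R - T)) * ∏ y ∈ I, (X - C (c y)) ^ k y).eval t := by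
  simp only [eval_mul, eval_C, eval_prod, eval_pow, eval_sub, eval_X]
  conv_lhs => rw [← Nat.sub_add_cancel hTR, pow_add]
  exact mul_dvd_mul_left _ ((pow_dvd_pow _ (hT x hx)).trans (pow_ballOrder_dvd_prod hI k hx ht))

theorem eval_ne_zero_and_padicValInt_add_le (hI : BallsPairwiseDisjoint p I c n) (hTR : T ≤ R)
    (huT : u ≤ T) (hgap : ∀ x ∈ I, u + ballOrder p I c n k x ≤ k x + T) {t : ℤ}
    (ht : ∀ x ∈ I, ¬ (p : ℤ) ^ n x ∣ t - c x) :
    (C ((p : ℤ) ^ (R - T)) * ∏ y ∈ I, (X - C (c y)) ^ k y).eval t ≠ 0 ∧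
      padicValInt p ((C ((p : ℤ) ^ (R - T)) * ∏ y ∈ I, (X - C (c y)) ^ k y).eval t) + u ≤ R := by
  simp only [eval_mul, eval_C, eval_prod, eval_pow, eval_sub, eval_X]
  have hp : (p : ℤ) ^ (R - T) ≠ 0 :=
    pow_ne_zero _ (by exact_mod_cast (Fact.out : p.Prime).ne_zero)
  have hprod : ∏ y ∈ I, (t - c y) ^ k y ≠ 0 := prod_ne_zero_iff.mpr fun y hy =>
    pow_ne_zero _ (ne_zero_and_padicValInt_lt_of_not_pow_dvd (ht y hy)).1
  have hval : padicValInt p (∏ y ∈ I, (t - c y) ^ k y) + u ≤ T := by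
    rcases I.eq_empty_or_nonempty with rfl | hne
    · simpa using huT
    · obtain ⟨x, hx, hle⟩ := exists_padicValInt_prod_add_le hI k hne ht
      have := hgap x hx
      omega
  refine ⟨mul_ne_zero hp hprod, ?_⟩
  rw [padicValInt.mul hp hprod, padicValInt_prime_pow]
  omega

theorem pow_dvd_eval_iff (hI : BallsPairwiseDisjoint p I c n) (hu : 0 < u) (hTR : T ≤ R)
    (huT : u ≤ T) (hT : ∀ x ∈ I, T ≤ ballOrder p I c n k x)
    (hgap : ∀ x ∈ I, u + ballOrder p I c n k x ≤ k x + T) (t : ℤ) :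
    (p : ℤ) ^ R ∣ (C ((p : ℤ) ^ (R - T)) * ∏ y ∈ I, (X - C (c y)) ^ k y).eval t ↔
      ∃ x ∈ I, (p : ℤ) ^ n x ∣ t - c x := by
  refine ⟨fun hdvd => ?_, fun ⟨x, hx, ht⟩ => pow_dvd_eval_of_mem_ball hI hTR hT hx ht⟩
  by_contra! ht
  obtain ⟨hne, hle⟩ := eval_ne_zero_and_padicValInt_add_le hI hTR huT hgap ht
  rw [padicValInt_dvd_iff] at hdvd
  omega

end Balls

theorem add_sum_mul_le_add_sum_mul_min {ι : Type*} {J : Finset ι} {lev : ι → ℕ} {L B : ℕ}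
    (u : ℕ) (hlev : ∀ z ∈ J, lev z < L) (hB : L * #J + 1 ≤ B) {x : ι} (hx : x ∈ J) :
    u + ∑ z ∈ J, u * B ^ (L - lev z) * lev z
      ≤ u * B ^ (L - lev x) + ∑ z ∈ J, u * B ^ (L - lev z) * min (lev x) (lev z) := by
  set e := L - lev x - 1
  have hB1 : 1 ≤ B := by omega
  have hterm : ∀ z ∈ J, u * B ^ (L - lev z) * lev z
      ≤ u * B ^ (L - lev z) * min (lev x) (lev z) + L * (u * B ^ e) := by
    intro z hz
    rcases le_or_gt (lev z) (lev x) with h | h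
    · rw [min_eq_right h]
      exact Nat.le_add_right _ _
    · calc u * B ^ (L - lev z) * lev z ≤ u * B ^ e * L :=
            Nat.mul_le_mul (Nat.mul_le_mul_left _ (pow_le_pow_right₀ hB1 (by omega)))
              (hlev z hz).le
        _ ≤ _ := by rw [mul_comm L]; exact Nat.le_add_left _ _
  have hpow : B ^ (L - lev x) = B * B ^ e := by
    rw [← pow_succ']
    have := hlev x hx
    congr 1
    omega
  have he : 1 ≤ B ^ e := Nat.one_le_pow _ _ hB1
  calc u + ∑ z ∈ J, u * B ^ (L - lev z) * lev z
      ≤ u + ∑ z ∈ J, (u * B ^ (L - lev z) * min (lev x) (lev z) + L * (u * B ^ e)) :=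
        Nat.add_le_add_left (sum_le_sum hterm) _
    _ = u + L * #J * (u * B ^ e) + ∑ z ∈ J, u * B ^ (L - lev z) * min (lev x) (lev z) := by
        rw [sum_add_distrib, sum_const, smul_eq_mul]
        ring
    _ ≤ _ := by
        rw [hpow]
        nlinarith [Nat.mul_le_mul_left u he, Nat.mul_le_mul_right (u * B ^ e) hB]

section Digits

variable {p : ℕ} {D : ℕ → ℕ} {L : ℕ}

def digitBalls (D : ℕ → ℕ) (L : ℕ) : Finset ((_ : ℕ) × ℕ) :=
  (range L).sigma fun s => range (D s)

/-- The ball `(s, j)` is the class modulo `p ^ (s + 1)` of the numbers whose base-`p` digits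
begin with `D 0, …, D (s - 1), j`. -/
def digitCenter (p : ℕ) (D : ℕ → ℕ) (x : (_ : ℕ) × ℕ) : ℤ :=
  ∑ s ∈ range x.1, (D s : ℤ) * p ^ s + x.2 * p ^ x.1

def digitWeight (D : ℕ → ℕ) (L u : ℕ) (x : (_ : ℕ) × ℕ) : ℕ :=
  u * (L * #(digitBalls D L) + 1) ^ (L - x.1)

theorem lt_of_mem_digitBalls {x : (_ : ℕ) × ℕ} (hx : x ∈ digitBalls D L) : x.1 < L :=
  mem_range.mp (mem_sigma.mp hx).1

theorem sum_digitBalls (f : ℕ → ℕ) :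
    ∑ x ∈ digitBalls D L, f x.1 = ∑ s ∈ range L, D s * f s := by
  simp [digitBalls, sum_sigma]

theorem not_pow_succ_dvd_mul_pow {a : ℤ} (ha : a ≠ 0) (hap : a.natAbs < p) (s : ℕ) :
    ¬ (p : ℤ) ^ (s + 1) ∣ a * p ^ s := by
  rw [pow_succ, mul_comm a, mul_dvd_mul_iff_left (pow_ne_zero _ (by omega))]
  exact fun h => ha (Int.eq_zero_of_dvd_of_natAbs_lt_natAbs h (by simpa using hap))

theorem pow_succ_dvd_digitCenter_sub_of_lt {x y : (_ : ℕ) × ℕ} (hxy : x.1 < y.1) :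
    (p : ℤ) ^ (x.1 + 1) ∣
      digitCenter p D y - digitCenter p D x - ((D x.1 : ℤ) - x.2) * p ^ x.1 := by
  have h : digitCenter p D y - digitCenter p D x - ((D x.1 : ℤ) - x.2) * p ^ x.1
      = ∑ s ∈ Ico (x.1 + 1) y.1, (D s : ℤ) * p ^ s + y.2 * p ^ y.1 := by
    rw [digitCenter, digitCenter, sum_Ico_eq_sub _ hxy, sum_range_succ]
    ring
  rw [h]
  exact dvd_add (dvd_sum fun s hs => dvd_mul_of_dvd_right (pow_dvd_pow _ (mem_Ico.1 hs).1) _)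
    (dvd_mul_of_dvd_right (pow_dvd_pow _ hxy) _)

theorem pow_dvd_digitCenter_sub_and_not_pow_succ_dvd (hD : ∀ s, D s < p)
    {x y : (_ : ℕ) × ℕ} (hx : x ∈ digitBalls D L) (hy : y ∈ digitBalls D L) (hxy : x ≠ y) :
    (p : ℤ) ^ min x.1 y.1 ∣ digitCenter p D y - digitCenter p D x ∧
      ¬ (p : ℤ) ^ (min x.1 y.1 + 1) ∣ digitCenter p D y - digitCenter p D x := by
  wlog hle : x.1 ≤ y.1 generalizing x y
  · obtain ⟨h, h'⟩ := this hy hx hxy.symm (le_of_not_ge hle)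
    rw [min_comm, dvd_sub_comm] at h h'
    exact ⟨h, h'⟩
  obtain ⟨s, j⟩ := x
  obtain ⟨s', j'⟩ := y
  simp only [digitBalls, mem_sigma, mem_range] at hx hy hle ⊢
  rw [min_eq_left hle]
  rcases hle.lt_or_eq with hlt | rfl
  · obtain ⟨w, hw⟩ :=
      pow_succ_dvd_digitCenter_sub_of_lt (p := p) (D := D) (x := ⟨s, j⟩) (y := ⟨s', j'⟩) hlt
    dsimp only at hw
    rw [sub_eq_iff_eq_add] at hw
    rw [hw]
    refine ⟨dvd_add ((pow_dvd_pow _ s.le_succ).trans (dvd_mul_right _ _)) (dvd_mul_left _ _), ?_⟩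
    rw [dvd_add_right (dvd_mul_right _ _)]
    exact not_pow_succ_dvd_mul_pow (by omega) (by have := hD s; omega) s
  · have hjj : j ≠ j' := fun h => hxy (h ▸ rfl)
    have h : digitCenter p D ⟨s, j'⟩ - digitCenter p D ⟨s, j⟩ = ((j' : ℤ) - j) * p ^ s := by
      simp only [digitCenter]
      ring
    rw [h]
    exact ⟨dvd_mul_left _ _, not_pow_succ_dvd_mul_pow (by omega) (by have := hD s; omega) s⟩

theorem digitBalls_pairwiseDisjoint (hD : ∀ s, D s < p) :
    BallsPairwiseDisjoint p (digitBalls D L) (digitCenter p D) fun x => x.1 + 1 := by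
  intro x hx y hy hxy h
  refine (pow_dvd_digitCenter_sub_and_not_pow_succ_dvd hD hx hy hxy).2 ?_
  rw [dvd_sub_comm]
  exact (pow_dvd_pow _ (Nat.succ_le_succ (min_le_left _ _))).trans h

variable [Fact p.Prime]

theorem padicValInt_digitCenter_sub (hD : ∀ s, D s < p) {x y : (_ : ℕ) × ℕ}
    (hx : x ∈ digitBalls D L) (hy : y ∈ digitBalls D L) (hxy : x ≠ y) :
    padicValInt p (digitCenter p D x - digitCenter p D y) = min x.1 y.1 := by
  obtain ⟨h, h'⟩ := pow_dvd_digitCenter_sub_and_not_pow_succ_dvd hD hx hy hxy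
  rw [dvd_sub_comm] at h h'
  exact padicValInt_eq_of_pow_dvd_of_not_pow_succ_dvd h h'

theorem ballOrder_digitBalls (hD : ∀ s, D s < p) (k : (_ : ℕ) × ℕ → ℕ)
    {x : (_ : ℕ) × ℕ} (hx : x ∈ digitBalls D L) :
    ballOrder p (digitBalls D L) (digitCenter p D) (fun x => x.1 + 1) k x
      = k x + ∑ y ∈ digitBalls D L, k y * min x.1 y.1 := by
  rw [ballOrder, ← add_sum_erase _ _ hx, min_self,
    sum_congr rfl fun y hy => by
      rw [padicValInt_digitCenter_sub hD hx (mem_of_mem_erase hy) (ne_of_mem_erase hy).symm]]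
  ring

theorem le_ballOrder_digitBalls (hD : ∀ s, D s < p) (u : ℕ) {x : (_ : ℕ) × ℕ}
    (hx : x ∈ digitBalls D L) :
    u + ∑ z ∈ digitBalls D L, digitWeight D L u z * z.1
      ≤ ballOrder p (digitBalls D L) (digitCenter p D) (fun x => x.1 + 1)
          (digitWeight D L u) x := by
  rw [ballOrder_digitBalls hD _ hx]
  exact add_sum_mul_le_add_sum_mul_min u (fun z hz => lt_of_mem_digitBalls hz) le_rfl hx

theorem ballOrder_digitBalls_le (hD : ∀ s, D s < p) (u : ℕ) {x : (_ : ℕ) × ℕ}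
    (hx : x ∈ digitBalls D L) :
    u + ballOrder p (digitBalls D L) (digitCenter p D) (fun x => x.1 + 1) (digitWeight D L u) x
      ≤ digitWeight D L u x + (u + ∑ z ∈ digitBalls D L, digitWeight D L u z * z.1) := by
  rw [ballOrder_digitBalls hD _ hx]
  have := sum_le_sum fun z (_ : z ∈ digitBalls D L) =>
    Nat.mul_le_mul_left (digitWeight D L u z) (min_le_right x.1 z.1)
  omega

end Digits

theorem exists_poly_with_prescribed_zero_density_general (p : ℕ) (hp : p.Prime)
    (ℓ u : ℕ) (hu : 1 ≤ u) (m : ℕ) (hm : m ≤ p ^ ℓ) :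
    ∀ r₀ : ℕ, ∃ r : ℕ, r₀ ≤ r ∧ ∃ P : Polynomial ℤ,
      ((Finset.range (p ^ (r + ℓ))).filter
        fun t : ℕ => (p : ℤ) ^ (r + ℓ) ∣ P.eval (t : ℤ)).card = m * p ^ r ∧
      ∀ t : ℤ, ¬ (p : ℤ) ^ (r + ℓ) ∣ P.eval t →
        P.eval t ≠ 0 ∧ (padicValInt p (P.eval t) : ℤ) ≤ (r : ℤ) + ℓ - u := by
  intro r₀
  have : Fact p.Prime := ⟨hp⟩
  rcases hm.eq_or_lt with rfl | hm
  · exact ⟨r₀, le_rfl, 0, by simp [pow_add, mul_comm], by simp⟩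
  -- `D s` is the digit of `m` at `p ^ (ℓ - 1 - s)`: the `D s` balls modulo `p ^ (s + 1)` then
  -- make up `D s * p ^ (ℓ - 1 - s)` classes modulo `p ^ ℓ`.
  set D : ℕ → ℕ := fun s => m / p ^ (ℓ - 1 - s) % p
  have hD : ∀ s, D s < p := fun s => Nat.mod_lt _ hp.pos
  set T := u + ∑ z ∈ digitBalls D ℓ, digitWeight D ℓ u z * z.1
  have hJ := digitBalls_pairwiseDisjoint (L := ℓ) hD
  have hzeros := pow_dvd_eval_iff hJ hu (T := T) (R := r₀ + T + ℓ) (by omega) (by omega)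
    (fun x hx => le_ballOrder_digitBalls hD u hx) (fun x hx => ballOrder_digitBalls_le hD u hx)
  refine ⟨r₀ + T, by omega, C ((p : ℤ) ^ (r₀ + T + ℓ - T)) *
    ∏ y ∈ digitBalls D ℓ, (X - C (digitCenter p D y)) ^ digitWeight D ℓ u y, ?_, fun t ht => ?_⟩
  · rw [filter_congr fun (t : ℕ) _ => hzeros t,
      card_filter_exists_pow_dvd_sub hp.pos hJ fun x hx => by
        have := lt_of_mem_digitBalls hx
        omega,
      sum_digitBalls fun s => p ^ (r₀ + T + ℓ - (s + 1)), sum_range_reverse_digit_mul_pow hm]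
  · obtain ⟨hne, hle⟩ := eval_ne_zero_and_padicValInt_add_le hJ (T := T) (R := r₀ + T + ℓ)
      (by omega) (by omega) (fun x hx => ballOrder_digitBalls_le hD u hx)
      fun x hx hdvd => ht ((hzeros t).mpr ⟨x, hx, hdvd⟩)
    exact ⟨hne, by omega⟩

theorem exists_poly_with_prescribed_zero_density (p : ℕ) (hp : p.Prime)
    (ℓ u : ℕ) (hℓ : 1 ≤ ℓ) (hu : 1 ≤ u) (m : ℕ) (hm : m ≤ p ^ ℓ) :
    ∀ r₀ : ℕ, ∃ r : ℕ, r₀ ≤ r ∧ ∃ P : Polynomial ℤ,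
      ((Finset.range (p ^ (r + ℓ))).filter
        fun t : ℕ => (p : ℤ) ^ (r + ℓ) ∣ P.eval (t : ℤ)).card = m * p ^ r ∧
      ∀ t : ℤ, ¬ (p : ℤ) ^ (r + ℓ) ∣ P.eval t →
        P.eval t ≠ 0 ∧ (padicValInt p (P.eval t) : ℤ) ≤ (r : ℤ) + ℓ - u :=
  exists_poly_with_prescribed_zero_density_general p hp ℓ u hu m hm
end

section
/- Let h, k be coprime integers with k > 0 and 0 < |h/k| < 1, and let p₁,…,p_g be the distinct prime factors of k. Then there exist integers d₁,…,d_g and positive integers r₁,…,r_g such that |d_i| < p_i^{r_i} for each i and h/k = ∏_{i=1}^{g} d_i / p_i^{r_i}. -/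
/-!
Write `k = q ^ a * k'` with `q` prime and `q ∤ k'`, `k' > 1`. Since `log k' / log q` is
irrational, the numbers `k' ^ x / q ^ y` are dense in `(0, ∞)`, so some of them lies in
`(|h| / k', q ^ a)`, an interval that is nonempty because `|h| < k`. For such `x, y`,
  `h / k = (k' ^ x / q ^ (a + y)) * (h * q ^ y / k' ^ (x + 1))`,
where the first factor is a proper fraction with a power of `q` as denominator and the second is
again of the form `h' / k''` with `|h'| < k''`, whose denominator has the prime factors of `k'`.
Induction on the set of prime factors finishes the proof.
-/

open Real Set

theorem irrational_log_div_log_of_coprime {m n : ℕ} (hm : 1 < m) (hn : 1 < n)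
    (hmn : m.Coprime n) : Irrational (log m / log n) := by
  rintro ⟨r, hr⟩
  have hlm : 0 < log m := log_pos (by exact_mod_cast hm)
  have hln : 0 < log n := log_pos (by exact_mod_cast hn)
  have hr₀ : (0 : ℝ) ≤ r := hr ▸ (div_pos hlm hln).le
  obtain ⟨N, hN⟩ := Int.eq_ofNat_of_zero_le (Rat.num_nonneg.2 (by exact_mod_cast hr₀))
  have hlog : r.den * log m = N * log n := by
    rw [← Rat.num_div_den r, hN] at hr
    push_cast at hr
    field_simp at hr
    linarith
  have hpow : m ^ r.den = n ^ N := by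
    rw [← log_pow, ← log_pow] at hlog
    exact_mod_cast log_injOn_pos (by simp; positivity) (by simp; positivity) hlog
  have hone : m ^ r.den = 1 :=
    (Nat.coprime_self _).1 (by simpa [hpow] using Nat.Coprime.pow r.den N hmn)
  simp [hm.ne', r.den_ne_zero] at hone

theorem exists_nat_mul_sub_nat_mul_mem_Ioo_of_pos {a b u v : ℝ} (hb : 0 < b) {x₀ y₀ : ℕ}
    (hpos : 0 < x₀ * a - y₀ * b) (hlt : x₀ * a - y₀ * b < v - u) :
    ∃ x y : ℕ, x * a - y * b ∈ Ioo u v := by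
  -- Shift the target by `K * b` to the right of `0`, then take the first multiple of `s` past it.
  set s := x₀ * a - y₀ * b
  obtain ⟨K, hK⟩ := exists_nat_gt (-u / b)
  have hc : 0 < u + K * b := by rw [div_lt_iff₀ hb] at hK; linarith
  set N := ⌊(u + K * b) / s⌋₊ + 1
  have hN₁ : u + K * b < N * s := by
    rw [← div_lt_iff₀ hpos]; push_cast [N]; exact Nat.lt_floor_add_one _
  have hN₂ : N * s ≤ u + K * b + s := by
    have := Nat.floor_le (div_pos hc hpos).le
    rw [le_div_iff₀ hpos] at this
    push_cast [N]; linarith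
  refine ⟨N * x₀, N * y₀ + K, ?_, ?_⟩ <;> push_cast <;> nlinarith

theorem exists_nat_mul_sub_nat_mul_abs_lt {a b δ : ℝ} (ha : 0 < a) (hb : 0 < b)
    (hab : Irrational (a / b)) (hδ : 0 < δ) :
    ∃ x y : ℕ, 0 < |x * a - y * b| ∧ |x * a - y * b| < δ := by
  obtain ⟨n, hn⟩ := exists_nat_gt (b / δ)
  have hn₀ : 0 < n := by exact_mod_cast (div_pos hb hδ).trans hn
  obtain ⟨j, k, hk, -, hjk⟩ := Real.exists_int_int_abs_mul_sub_le (a / b) hn₀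
  lift k to ℕ using hk.le
  push_cast at hjk
  have hk' : (0 : ℝ) < k := by exact_mod_cast hk
  have hj : 0 ≤ j := by
    have : (1 : ℝ) / (n + 1) ≤ 1 / 2 := by gcongr; norm_cast; omega
    have : ((-1 : ℤ) : ℝ) < j := by
      push_cast
      linarith [le_abs_self ((k : ℝ) * (a / b) - j), show 0 < (k : ℝ) * (a / b) by positivity]
    have : (-1 : ℤ) < j := by exact_mod_cast this
    omega
  lift j to ℕ using hj
  push_cast at hjk
  have hscale : (k : ℝ) * a - j * b = b * (k * (a / b) - j) := by field_simp
  refine ⟨k, j, ?_, ?_⟩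
  · have := ((hab.natCast_mul (by exact_mod_cast hk.ne')).sub_natCast j).ne_zero
    rw [hscale, abs_mul]
    exact mul_pos (abs_pos.2 hb.ne') (abs_pos.2 this)
  · rw [hscale, abs_mul, abs_of_pos hb]
    calc b * |k * (a / b) - j| ≤ b * (1 / (n + 1)) := by gcongr
      _ < δ := by
        rw [div_lt_iff₀ hδ] at hn
        rw [mul_one_div, div_lt_iff₀ (by positivity)]
        linarith

theorem exists_nat_mul_sub_nat_mul_mem_Ioo {a b u v : ℝ} (ha : 0 < a) (hb : 0 < b)
    (hab : Irrational (a / b)) (huv : u < v) :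
    ∃ x y : ℕ, x * a - y * b ∈ Ioo u v := by
  obtain ⟨x₀, y₀, hne, hlt⟩ := exists_nat_mul_sub_nat_mul_abs_lt ha hb hab (sub_pos.2 huv)
  rcases lt_or_gt_of_ne (abs_pos.1 hne) with hneg | hpos
  · rw [abs_of_neg hneg] at hlt
    obtain ⟨y, x, hyx⟩ := exists_nat_mul_sub_nat_mul_mem_Ioo_of_pos (a := b) (b := a)
      (u := -v) (v := -u) (x₀ := y₀) (y₀ := x₀) ha (by linarith) (by linarith)
    exact ⟨x, y, by constructor <;> linarith [hyx.1, hyx.2]⟩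
  · rw [abs_of_pos hpos] at hlt
    exact exists_nat_mul_sub_nat_mul_mem_Ioo_of_pos hb hpos hlt

theorem exists_mul_pow_lt_pow_lt_mul_pow {m n : ℕ} (hm : 1 < m) (hn : 1 < n)
    (hmn : m.Coprime n) {u v : ℝ} (hu : 0 < u) (huv : u < v) :
    ∃ x y : ℕ, u * n ^ y < m ^ x ∧ (m : ℝ) ^ x < v * n ^ y := by
  have hm₀ : (0 : ℝ) < m := by positivity
  have hn₀ : (0 : ℝ) < n := by positivity
  have hv : 0 < v := hu.trans huv
  obtain ⟨x, y, hlo, hhi⟩ := exists_nat_mul_sub_nat_mul_mem_Ioo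
    (log_pos (by exact_mod_cast hm)) (log_pos (by exact_mod_cast hn))
    (irrational_log_div_log_of_coprime hm hn hmn) (log_lt_log hu huv)
  refine ⟨x, y, ?_, ?_⟩
  · rw [← log_lt_log_iff (by positivity) (by positivity), log_mul hu.ne' (by positivity),
      log_pow, log_pow]
    linarith
  · rw [← log_lt_log_iff (by positivity) (by positivity), log_mul hv.ne' (by positivity),
      log_pow, log_pow]
    linarith

theorem exists_pow_lt_pow_and_mul_pow_lt_pow {m n : ℕ} (hm : 1 < m) (hn : 1 < n)
    (hmn : m.Coprime n) {H a : ℕ} (hH : 0 < H) (hHa : H < n ^ a * m) :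
    ∃ x y : ℕ, m ^ x < n ^ (a + y) ∧ H * n ^ y < m ^ (x + 1) := by
  have hm₀ : (0 : ℝ) < m := by positivity
  obtain ⟨x, y, hlo, hhi⟩ := exists_mul_pow_lt_pow_lt_mul_pow hm hn hmn
    (u := H / m) (v := n ^ a) (by positivity) (by rw [div_lt_iff₀ hm₀]; exact_mod_cast hHa)
  refine ⟨x, y, ?_, ?_⟩
  · rw [pow_add]
    exact_mod_cast hhi
  · rw [div_mul_eq_mul_div, div_lt_iff₀ hm₀, ← pow_succ] at hlo
    exact_mod_cast hlo

def IsProperFractionProd (s : Finset ℕ) (x : ℚ) : Prop :=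
  ∃ (d : ℕ → ℤ) (r : ℕ → ℕ), (∀ q ∈ s, 0 < r q ∧ |d q| < (q : ℤ) ^ (r q)) ∧
    x = ∏ q ∈ s, (d q : ℚ) / (q : ℚ) ^ (r q)

namespace IsProperFractionProd

theorem empty : IsProperFractionProd ∅ 1 := ⟨0, 0, by simp, by simp⟩

theorem insert {s : Finset ℕ} {x : ℚ} {q r : ℕ} {d : ℤ} (hq : q ∉ s) (hr : 0 < r)
    (hd : |d| < (q : ℤ) ^ r) (hx : IsProperFractionProd s x) :
    IsProperFractionProd (insert q s) (d / q ^ r * x) := by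
  obtain ⟨d', r', hbound, rfl⟩ := hx
  refine ⟨Function.update d' q d, Function.update r' q r, ?_, ?_⟩
  · intro p hp
    rcases Finset.mem_insert.1 hp with rfl | hp
    · simpa using ⟨hr, hd⟩
    · simpa [ne_of_mem_of_not_mem hp hq] using hbound p hp
  · rw [Finset.prod_insert hq]
    simp only [Function.update_self]
    congr 1
    refine Finset.prod_congr rfl fun p hp ↦ ?_
    simp [ne_of_mem_of_not_mem hp hq]

end IsProperFractionProd

theorem isProperFractionProd_div (k : ℕ) (h : ℤ) (hh : h ≠ 0) (hhk : |h| < k) :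
    IsProperFractionProd k.primeFactors (h / k) := by
  generalize hs : k.primeFactors = s
  induction s using Finset.induction_on generalizing k h with
  | empty =>
    rcases Nat.primeFactors_eq_empty.1 hs with rfl | rfl <;>
    · have := abs_pos.2 hh
      push_cast at hhk
      omega
  | insert q t hq ih =>
    obtain ⟨hqp, hqk, hk₀⟩ := Nat.mem_primeFactors.1 (hs ▸ Finset.mem_insert_self q t)
    set a := k.factorization q
    set k' := ordCompl[q] k
    have ha : 0 < a := hqp.factorization_pos_of_dvd hk₀ hqk
    have hk : q ^ a * k' = k := Nat.ordProj_mul_ordCompl_eq_self k q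
    have ht : k'.primeFactors = t := by
      rw [← Nat.support_factorization, Nat.factorization_ordCompl, Finsupp.support_erase,
        Nat.support_factorization, hs, Finset.erase_insert hq]
    have hq₀ : q ≠ 0 := hqp.ne_zero
    rcases Nat.lt_or_ge 1 k' with hk' | hk'
    · have hH : h.natAbs < q ^ a * k' := by
        rw [hk, ← Int.ofNat_lt, Int.natCast_natAbs]; exact hhk
      obtain ⟨x, y, hx, hy⟩ := exists_pow_lt_pow_and_mul_pow_lt_pow hk' hqp.one_lt
        (Nat.coprime_ordCompl hqp hk₀).symm (Int.natAbs_pos.2 hh) hH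
      have hrest := ih (k' ^ (x + 1)) (h * q ^ y) (mul_ne_zero hh (by positivity))
        (by rw [abs_mul, ← Int.natCast_natAbs, abs_of_nonneg (by positivity)]; exact_mod_cast hy)
        (by rw [Nat.primeFactors_pow _ x.succ_ne_zero, ht])
      have hsplit : (h : ℚ) / k = ((k' ^ x : ℕ) : ℤ) / q ^ (a + y) *
          (((h * q ^ y : ℤ) : ℚ) / (k' ^ (x + 1) : ℕ)) := by
        rw [← hk]
        push_cast
        field_simp
        ring
      rw [hsplit]
      exact hrest.insert hq (by omega) (by exact_mod_cast hx)
    · have hk'1 : k' = 1 := by have := Nat.ordCompl_pos q hk₀; omega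
      obtain rfl : t = ∅ := by rw [← ht, hk'1, Nat.primeFactors_one]
      rw [← hk, hk'1, mul_one] at hhk ⊢
      rw [← mul_one ((h : ℚ) / _), Nat.cast_pow]
      exact IsProperFractionProd.empty.insert hq ha (by exact_mod_cast hhk)

theorem rat_as_prime_power_product_general (h k : ℤ) (hk : 0 < k)
    (hne : h ≠ 0) (hlt : |(h : ℚ) / (k : ℚ)| < 1) :
    ∃ (d : ℕ → ℤ) (r : ℕ → ℕ),
      (∀ q ∈ k.natAbs.primeFactors, 0 < r q ∧ |d q| < (q : ℤ) ^ (r q)) ∧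
      (h : ℚ) / (k : ℚ) = ∏ q ∈ k.natAbs.primeFactors, (d q : ℚ) / (q : ℚ) ^ (r q) := by
  lift k to ℕ using hk.le
  have hhk : |h| < k := by
    rw [abs_div, div_lt_one (by positivity)] at hlt
    exact_mod_cast hlt
  rw [Int.natAbs_natCast, Int.cast_natCast]
  exact isProperFractionProd_div k h hne hhk

theorem rat_as_prime_power_product (h k : ℤ) (hcop : IsCoprime h k) (hk : 0 < k)
    (hne : h ≠ 0) (hlt : |(h : ℚ) / (k : ℚ)| < 1) :
    ∃ (d : ℕ → ℤ) (r : ℕ → ℕ),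
      (∀ q ∈ k.natAbs.primeFactors, 0 < r q ∧ |d q| < (q : ℤ) ^ (r q)) ∧
      (h : ℚ) / (k : ℚ) = ∏ q ∈ k.natAbs.primeFactors, (d q : ℚ) / (q : ℚ) ^ (r q) :=
  rat_as_prime_power_product_general h k hk hne hlt
end

section
/- Let R ∈ ℂ[t] be a polynomial of degree 2 and k ∈ ℂ with k ≠ 0. Then R³ − k is not divisible by the square of any polynomial of degree 2 in ℂ[t]. -/
/-!
If `Q ^ 2` divides `R ^ 3 - k`, then `Q` divides its derivative `3 R ^ 2 R'`. As `R ^ 3` is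
congruent to the unit `k` modulo `Q`, the polynomial `Q` is coprime to `R`, so `Q` divides `R'`,
which is nonzero of degree `1 < deg Q`.
-/

open Polynomial

theorem isCoprime_of_dvd_sub_of_isUnit {A : Type*} [CommRing A] {a b u : A} (hu : IsUnit u)
    (h : a ∣ b - u) : IsCoprime a b := by
  obtain ⟨s, hs⟩ := h
  rw [sub_eq_iff_eq_add.mp hs]
  have hau : IsCoprime a u := by
    simpa using (isCoprime_mul_unit_left_right hu a 1).mpr isCoprime_one_right
  exact hau.mul_add_left_right s

namespace Polynomial

theorem dvd_C_mul_derivative_of_sq_dvd_pow_sub_C {A : Type*} [CommRing A] {Q R : A[X]} {k : A}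
    {n : ℕ} (hn : n ≠ 0) (hk : IsUnit k) (h : Q ^ 2 ∣ R ^ n - C k) :
    Q ∣ C (n : A) * derivative R := by
  have hQ : Q ∣ C (n : A) * derivative R * R ^ (n - 1) := by
    have := pow_sub_one_dvd_derivative_of_pow_dvd h
    rwa [pow_one, derivative_sub, derivative_C, sub_zero, derivative_pow, mul_right_comm] at this
  have hcop : IsCoprime Q (R ^ (n - 1)) :=
    ((IsCoprime.pow_right_iff (Nat.pos_of_ne_zero hn)).mp
      (isCoprime_of_dvd_sub_of_isUnit (isUnit_C.mpr hk) (dvd_of_mul_left_dvd h))).pow_right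
  exact hcop.dvd_of_dvd_mul_right hQ

theorem not_dvd_derivative_of_degree_le {K : Type*} [Field K] [CharZero K] {p q : K[X]}
    (hp : 0 < p.natDegree) (h : p.degree ≤ q.degree) : ¬ q ∣ derivative p := by
  intro hdvd
  have hp' : derivative p ≠ 0 := fun h0 => hp.ne' (derivative_eq_zero.mp h0)
  exact (degree_derivative_lt (ne_zero_of_natDegree_gt hp)).not_ge
    (h.trans (degree_le_of_dvd hdvd hp'))

end Polynomial

theorem cube_sub_const_not_div_by_square (R : ℂ[X]) (hR : R.degree = 2)
    (k : ℂ) (hk : k ≠ 0) :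
    ¬ ∃ Q : ℂ[X], Q.degree = 2 ∧ Q ^ 2 ∣ (R ^ 3 - C k) := by
  rintro ⟨Q, hQ, hdvd⟩
  have hQR : Q ∣ derivative R :=
    (isUnit_C.mpr (by norm_num)).dvd_mul_left.mp
      (dvd_C_mul_derivative_of_sq_dvd_pow_sub_C three_ne_zero hk.isUnit hdvd)
  exact not_dvd_derivative_of_degree_le (by simp [natDegree_eq_of_degree_eq_some hR])
    (hR.trans hQ.symm).le hQR
end

section
/- Let R₁, R₂ ∈ ℂ[t] be polynomials of degree 2 and k ∈ ℂ with k ≠ 0. Then R₁³·R₂ − k is not the square of a polynomial in ℂ[t]. -/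
/-!
Since `k ≠ 0`, a relation `Q² = R₁³R₂ - k` makes `Q` coprime to `R₁`. Differentiating gives
`2QQ' = R₁²(3R₁'R₂ + R₁R₂')`, so `R₁² ∣ Q'`. But `deg Q = 4`, so `Q'` is a nonzero polynomial of
degree `3 < 4 = deg R₁²`.
-/

open Polynomial

theorem isCoprime_of_isUnit_mul_sub_sq {R : Type*} [CommRing R] {a b q : R}
    (h : IsUnit (a * b - q ^ 2)) : IsCoprime q a := by
  obtain ⟨u, hu⟩ := h.exists_left_inv
  exact ⟨-(u * q), u * b, by linear_combination hu⟩

theorem pow_dvd_derivative_of_sq_eq_pow_succ_mul_sub_C {R : Type*} [CommRing R] {a b q : R[X]}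
    {n : ℕ} {k : R} (h2 : IsUnit (2 : R)) (hk : IsUnit k) (h : q ^ 2 = a ^ (n + 1) * b - C k) :
    a ^ n ∣ derivative q := by
  have hcop : IsCoprime q a :=
    isCoprime_of_isUnit_mul_sub_sq (b := a ^ n * b) <| by
      rw [← mul_assoc, ← pow_succ', h, sub_sub_cancel]
      exact isUnit_C.mpr hk
  have hdvd : a ^ n ∣ C 2 * (q * derivative q) := by
    rw [← mul_assoc, ← derivative_sq, h, derivative_sub, derivative_C, sub_zero]
    exact pow_sub_one_dvd_derivative_of_pow_dvd (n := n + 1) (dvd_mul_right _ _)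
  exact hcop.symm.pow_left.dvd_of_dvd_mul_left ((isUnit_C.mpr h2).dvd_mul_left.mp hdvd)

theorem natDegree_lt_of_dvd_derivative {R : Type*} [Semiring R] [NoZeroDivisors R]
    [IsAddTorsionFree R] {p q : R[X]} (hq : q.natDegree ≠ 0) (h : p ∣ derivative q) :
    p.natDegree < q.natDegree :=
  (natDegree_le_of_dvd h fun h0 => hq (derivative_eq_zero.mp h0)).trans_lt
    (natDegree_derivative_lt hq)

theorem cube_mul_sub_const_not_square (R₁ R₂ : ℂ[X]) (hR₁ : R₁.degree = 2)
    (hR₂ : R₂.degree = 2) (k : ℂ) (hk : k ≠ 0) :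
    ¬ ∃ Q : ℂ[X], R₁ ^ 3 * R₂ - C k = Q ^ 2 := by
  rintro ⟨Q, hQ⟩
  have hR₁0 : R₁ ≠ 0 := by rintro rfl; simp at hR₁
  have hR₂0 : R₂ ≠ 0 := by rintro rfl; simp at hR₂
  have hR₁' : R₁.natDegree = 2 := natDegree_eq_of_degree_eq_some hR₁
  have hR₂' : R₂.natDegree = 2 := natDegree_eq_of_degree_eq_some hR₂
  have hQdeg : Q.natDegree = 4 := by
    have h := congrArg natDegree hQ
    rw [natDegree_sub_C, natDegree_mul (pow_ne_zero 3 hR₁0) hR₂0, natDegree_pow,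
      natDegree_pow, hR₁', hR₂'] at h
    omega
  have hdvd : R₁ ^ 2 ∣ derivative Q :=
    pow_dvd_derivative_of_sq_eq_pow_succ_mul_sub_C (isUnit_iff_ne_zero.mpr two_ne_zero)
      hk.isUnit hQ.symm
  have hlt := natDegree_lt_of_dvd_derivative (by omega) hdvd
  rw [natDegree_pow] at hlt
  omega
end
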